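/- arXiv:1907.08201 — 2 statements merged into one kernel-verified Lean document; each statement's English description precedes it below -/
import Mathlib

section
/- Let ε₁, ε₂, … be i.i.d. standard normal random variables, S_{n,L} = Σ_{j=n+1}^{n+L} ε_j, ξ_{n,L} = S_{n,L}/√L, Δ = 1/L, t_n = nΔ, and let S_L(t) be the piecewise-linear interpolation S_L(t) = (1/Δ)[(t_n − t)ξ_{n−1,L} + (t − t_{n−1})ξ_{n,L}] for t ∈ [t_{n−1}, t_n], n = 1, 2, …. Then E S_L(t) = 0 for all t ≥ 0 and L, and for all fixed t ≥ 0 and s ≥ 0 the covariance of the interpolated process converges to the triangular autocorrelation function: lim_{L→∞} Cov(S_L(t), S_L(t+s)) = max{0, 1 − s}. -/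
open MeasureTheory ProbabilityTheory Filter
open scoped NNReal
open scoped ENNReal

section GaussAux

open Real

lemma gauss_pdf_eq (x : ℝ) : gaussianPDFReal 0 1 x
    = (Real.sqrt (2*π))⁻¹ * Real.exp (-(2⁻¹) * x^2) := by
  rw [gaussianPDFReal]
  push_cast
  rw [mul_one, sub_zero]
  congr 1
  ring

lemma integral_gaussianReal_eq (g : ℝ → ℝ) :
    ∫ x, g x ∂(gaussianReal 0 1) = ∫ x, gaussianPDFReal 0 1 x * g x := by
  rw [gaussianReal_of_var_ne_zero 0 one_ne_zero]
  have h : (gaussianPDF 0 1)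
      = fun x => (((gaussianPDFReal 0 1 x).toNNReal : ℝ≥0) : ℝ≥0∞) := rfl
  rw [h, integral_withDensity_eq_integral_smul
    (measurable_gaussianPDFReal 0 1).real_toNNReal g]
  congr 1; funext x
  simp [NNReal.smul_def, Real.coe_toNNReal _ (gaussianPDFReal_nonneg _ _ _)]

lemma integrable_gaussianReal_iff {g : ℝ → ℝ} :
    Integrable g (gaussianReal 0 1) ↔
      Integrable (fun x => gaussianPDFReal 0 1 x * g x) volume := by
  rw [gaussianReal_of_var_ne_zero 0 one_ne_zero]
  have h : (gaussianPDF 0 1)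
      = fun x => (((gaussianPDFReal 0 1 x).toNNReal : ℝ≥0) : ℝ≥0∞) := rfl
  rw [h, integrable_withDensity_iff_integrable_smul
    (measurable_gaussianPDFReal 0 1).real_toNNReal]
  constructor <;> intro hh <;> refine hh.congr (Filter.Eventually.of_forall fun x => ?_) <;>
    simp [NNReal.smul_def, Real.coe_toNNReal _ (gaussianPDFReal_nonneg _ _ _)]

lemma pow_two_eq_rpow (x : ℝ) : x ^ (2:ℝ) = x ^ 2 := by
  rw [show (2:ℝ) = ((2:ℕ):ℝ) by norm_num, Real.rpow_natCast]

lemma integrable_sq_gaussianReal : Integrable (fun x : ℝ => x ^ 2) (gaussianReal 0 1) := by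
  rw [integrable_gaussianReal_iff]
  have h := (integrable_rpow_mul_exp_neg_mul_sq (by norm_num : (0:ℝ) < 2⁻¹)
    (by norm_num : (-1:ℝ) < 2)).const_mul (Real.sqrt (2*π))⁻¹
  refine h.congr (Filter.Eventually.of_forall fun x => ?_)
  simp only [gauss_pdf_eq, pow_two_eq_rpow]; ring

lemma integrable_id_gaussianReal : Integrable (fun x : ℝ => x) (gaussianReal 0 1) := by
  rw [integrable_gaussianReal_iff]
  have h := (integrable_mul_exp_neg_mul_sq (by norm_num : (0:ℝ) < 2⁻¹)).const_mul
    (Real.sqrt (2*π))⁻¹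
  refine h.congr (Filter.Eventually.of_forall fun x => ?_)
  simp only [gauss_pdf_eq]; ring

lemma integral_id_gaussianReal : ∫ x, x ∂(gaussianReal 0 1) = 0 := by
  rw [integral_gaussianReal_eq]
  set h : ℝ → ℝ := fun x => gaussianPDFReal 0 1 x * x with hh
  have key : ∫ x, h x = ∫ x, h (-x) := by
    conv_lhs => rw [← Measure.map_neg_eq_self (volume : Measure ℝ)]
    exact MeasurableEmbedding.integral_map (Homeomorph.neg ℝ).measurableEmbedding _
  have hodd : ∀ x, h (-x) = - h x := fun x => by
    simp only [hh, gauss_pdf_eq, neg_sq]; ring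
  have h2 : ∫ x, h x = - ∫ x, h x := by
    nth_rewrite 1 [key]
    simp_rw [hodd]
    exact integral_neg _
  linarith

lemma integral_sq_gaussianReal : ∫ x, x ^ 2 ∂(gaussianReal 0 1) = 1 := by
  rw [integral_gaussianReal_eq]
  have step1 : ∫ x, gaussianPDFReal 0 1 x * x ^ 2
      = (Real.sqrt (2*π))⁻¹ * ∫ x, (fun y => y^2 * Real.exp (-(2⁻¹) * y^2)) |x| := by
    rw [← integral_const_mul]
    congr 1; funext x
    simp only [sq_abs]
    rw [gauss_pdf_eq]; ring
  rw [step1, integral_comp_abs (f := fun y => y^2 * Real.exp (-(2⁻¹) * y^2))]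
  have step2 : ∫ x in Set.Ioi (0:ℝ), x^2 * Real.exp (-(2⁻¹) * x^2)
      = (2⁻¹:ℝ) ^ (-((2:ℝ)+1)/2) * (1/2) * Real.Gamma (((2:ℝ)+1)/2) := by
    rw [← integral_rpow_mul_exp_neg_mul_rpow (by norm_num : (0:ℝ) < 2)
      (by norm_num : (-1:ℝ) < 2) (by norm_num : (0:ℝ) < 2⁻¹)]
    refine setIntegral_congr_fun measurableSet_Ioi (fun x _ => ?_)
    rw [pow_two_eq_rpow]
  rw [step2]
  have hGamma : Real.Gamma (((2:ℝ)+1)/2) = (1/2) * Real.sqrt π := by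
    rw [show ((2:ℝ)+1)/2 = 1/2 + 1 by norm_num, Real.Gamma_add_one (by norm_num),
      Real.Gamma_one_half_eq]
  have hpow : (2⁻¹:ℝ) ^ (-((2:ℝ)+1)/2) = 2 * Real.sqrt 2 := by
    rw [show -((2:ℝ)+1)/2 = -(3/2) by norm_num, Real.rpow_neg (by norm_num),
      Real.inv_rpow (by norm_num), inv_inv,
      show (3/2:ℝ) = 1 + 1/2 by norm_num, Real.rpow_add (by norm_num), Real.rpow_one,
      ← Real.sqrt_eq_rpow]
  rw [hGamma, hpow, Real.sqrt_mul (by norm_num : (0:ℝ) ≤ 2)]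
  have h2 : Real.sqrt 2 > 0 := Real.sqrt_pos.mpr (by norm_num)
  have hpi : Real.sqrt π > 0 := Real.sqrt_pos.mpr Real.pi_pos
  field_simp

end GaussAux

/-- Coefficients of the interpolated moving sum as a linear combination of the `ε j`. -/
noncomputable def msCoef (L : ℕ) (t : ℝ) (j : ℕ) : ℝ :=
  ((if j ∈ Finset.Ioc (⌊t*L⌋₊) (⌊t*L⌋₊ + L) then ((⌊t*L⌋₊:ℝ) + 1 - t*L) else 0)
   + (if j ∈ Finset.Ioc (⌊t*L⌋₊+1) (⌊t*L⌋₊+1+L) then (t*L - (⌊t*L⌋₊:ℝ)) else 0)) / Real.sqrt L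

lemma sum_ite_mul_ite {N : ℕ} {I J : Finset ℕ} (hI : I ⊆ Finset.range N) (a b : ℝ) :
    ∑ j ∈ Finset.range N, (if j ∈ I then a else 0) * (if j ∈ J then b else 0)
      = ((I ∩ J).card : ℝ) * (a * b) := by
  have h : ∀ j, (if j ∈ I then a else 0) * (if j ∈ J then b else 0)
      = if j ∈ I ∩ J then a*b else 0 := fun j => by
    by_cases h1 : j ∈ I <;> by_cases h2 : j ∈ J <;> simp [Finset.mem_inter, h1, h2]
  simp_rw [h]
  rw [Finset.sum_ite_mem, Finset.inter_eq_right.mpr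
    (le_trans (Finset.inter_subset_left) hI), Finset.sum_const, nsmul_eq_mul]

lemma card_Ioc_inter (a b c d : ℕ) :
    (Finset.Ioc a b ∩ Finset.Ioc c d).card = min b d - max a c := by
  have h : Finset.Ioc a b ∩ Finset.Ioc c d = Finset.Ioc (max a c) (min b d) := by
    ext x; simp only [Finset.mem_inter, Finset.mem_Ioc]; omega
  rw [h, Nat.card_Ioc]

lemma cast_nat_sub_eq_max (x y : ℕ) : ((x - y : ℕ) : ℝ) = max 0 ((x:ℝ) - y) := by
  rcases le_total y x with h|h
  · rw [Nat.cast_sub h, max_eq_right (sub_nonneg.mpr (Nat.cast_le.mpr h))]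
  · rw [Nat.sub_eq_zero_of_le h, max_eq_left (sub_nonpos.mpr (Nat.cast_le.mpr h))]
    simp

lemma cast_overlap_card (a b L : ℕ) :
    ((min (a+L) (b+L) - max a b : ℕ) : ℝ) = max 0 ((L:ℝ) - |(a:ℝ) - (b:ℝ)|) := by
  rw [cast_nat_sub_eq_max]
  push_cast
  congr 1
  rcases le_total (a:ℝ) (b:ℝ) with h|h
  · rw [abs_of_nonpos (by linarith), min_eq_left (by linarith), max_eq_right h]; ring
  · rw [abs_of_nonneg (by linarith), min_eq_right (by linarith), max_eq_left h]; ring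

lemma convex_four {c d K1 K2 K3 K4 w1 w2 w3 w4 : ℝ}
    (h1 : |K1 - c| ≤ d) (h2 : |K2 - c| ≤ d) (h3 : |K3 - c| ≤ d) (h4 : |K4 - c| ≤ d)
    (hw1 : 0 ≤ w1) (hw2 : 0 ≤ w2) (hw3 : 0 ≤ w3) (hw4 : 0 ≤ w4)
    (hsum : w1 + w2 + w3 + w4 = 1) :
    |K1*w1 + K2*w2 + K3*w3 + K4*w4 - c| ≤ d := by
  rw [abs_le] at h1 h2 h3 h4 ⊢
  have q1l := mul_le_mul_of_nonneg_left h1.1 hw1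
  have q1u := mul_le_mul_of_nonneg_left h1.2 hw1
  have q2l := mul_le_mul_of_nonneg_left h2.1 hw2
  have q2u := mul_le_mul_of_nonneg_left h2.2 hw2
  have q3l := mul_le_mul_of_nonneg_left h3.1 hw3
  have q3u := mul_le_mul_of_nonneg_left h3.2 hw3
  have q4l := mul_le_mul_of_nonneg_left h4.1 hw4
  have q4u := mul_le_mul_of_nonneg_left h4.2 hw4
  have hd : w1*d + w2*d + w3*d + w4*d = d := by linear_combination d * hsum
  have hc : w1*c + w2*c + w3*c + w4*c = c := by linear_combination c * hsum
  constructor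
  · nlinarith [q1l, q2l, q3l, q4l, hd, hc]
  · nlinarith [q1u, q2u, q3u, q4u, hd, hc]

/-- Covariance of two real random variables. -/
noncomputable def covar {Ω : Type*} [MeasureSpace Ω] (X Y : Ω → ℝ) : ℝ :=
  ∫ ω, (X ω - (ℙ : Measure Ω)[X]) * (Y ω - (ℙ : Measure Ω)[Y]) ∂(ℙ : Measure Ω)

/-- For i.i.d. standard normal `ε j`, standardized moving sums
`ξ L n = (∑_{j=n+1}^{n+L} ε j)/√L`, and the piecewise-linear interpolation
`SL L t = L·[(t_{n+1} − t)·ξ L n + (t − t_n)·ξ L (n+1)]` on `[t_n, t_{n+1}]`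
(where `t_n = n/L`), the interpolated process has mean zero, and as `L → ∞` its
covariance converges to the triangular autocorrelation:
`Cov(SL L t, SL L (t+s)) → max {0, 1 − s}` for fixed `t, s ≥ 0`. -/
theorem interpolated_moving_sum_covariance
    {Ω : Type*} [MeasureSpace Ω] [IsProbabilityMeasure (ℙ : Measure Ω)]
    (ε : ℕ → Ω → ℝ)
    (hmeas : ∀ j, Measurable (ε j))
    (hindep : iIndepFun ε ℙ)
    (hdist : ∀ j, Measure.map (ε j) ℙ = gaussianReal 0 1)
    (ξ : ℕ → ℕ → Ω → ℝ)
    (hξ : ∀ L n ω, ξ L n ω = (∑ j ∈ Finset.Ioc n (n + L), ε j ω) / Real.sqrt L)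
    (SL : ℕ → ℝ → Ω → ℝ)
    (hSL : ∀ (L : ℕ) (n : ℕ) (t : ℝ), (n : ℝ) / L ≤ t → t ≤ ((n : ℝ) + 1) / L →
      ∀ ω, SL L t ω =
        (L : ℝ) * ((((n : ℝ) + 1) / L - t) * ξ L n ω + (t - (n : ℝ) / L) * ξ L (n + 1) ω)) :
    (∀ (L : ℕ), 0 < L → ∀ t : ℝ, 0 ≤ t → (ℙ : Measure Ω)[SL L t] = 0) ∧
    (∀ t s : ℝ, 0 ≤ t → 0 ≤ s →
      Tendsto (fun L : ℕ => covar (SL L t) (SL L (t + s))) atTop (nhds (max 0 (1 - s)))) := by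
  -- integrability and moments of the `ε j`
  have hInt2 : ∀ j, Integrable (fun ω => ε j ω ^ 2) (ℙ : Measure Ω) := by
    intro j
    have h : Integrable (fun x : ℝ => x ^ 2) (Measure.map (ε j) ℙ) := by
      rw [hdist j]; exact integrable_sq_gaussianReal
    rw [integrable_map_measure (by fun_prop) (hmeas j).aemeasurable] at h
    exact h
  have hInt : ∀ j, Integrable (ε j) (ℙ : Measure Ω) := by
    intro j
    have h : Integrable (id : ℝ → ℝ) (Measure.map (ε j) ℙ) := by
      rw [hdist j]; exact integrable_id_gaussianReal
    rw [integrable_map_measure aestronglyMeasurable_id (hmeas j).aemeasurable] at h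
    exact h
  have hMean : ∀ j, ∫ ω, ε j ω ∂(ℙ : Measure Ω) = 0 := by
    intro j
    have h := integral_map (μ := (ℙ : Measure Ω)) (φ := ε j) (hmeas j).aemeasurable
      (f := fun x : ℝ => x) aestronglyMeasurable_id
    rw [hdist j, _root_.integral_id_gaussianReal] at h
    exact h.symm
  have hIntMul : ∀ i j, Integrable (fun ω => ε i ω * ε j ω) (ℙ : Measure Ω) := by
    intro i j
    rcases eq_or_ne i j with rfl | hij
    · exact (hInt2 i).congr (Filter.Eventually.of_forall fun ω => by simp [sq])
    · exact (hindep.indepFun hij).integrable_mul (hInt i) (hInt j)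
  have hMom : ∀ i j, ∫ ω, ε i ω * ε j ω ∂(ℙ : Measure Ω) = if i = j then 1 else 0 := by
    intro i j
    rcases eq_or_ne i j with rfl | hij
    · simp only [if_pos rfl]
      have h := integral_map (μ := (ℙ : Measure Ω)) (φ := ε i) (hmeas i).aemeasurable
        (f := fun x : ℝ => x ^ 2) (by fun_prop)
      rw [hdist i, integral_sq_gaussianReal] at h
      simp_rw [← pow_two]
      exact h.symm
    · rw [if_neg hij]
      have h := (hindep.indepFun hij).integral_mul_eq_mul_integral
        (hmeas i).aestronglyMeasurable (hmeas j).aestronglyMeasurable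
      have h2 : ∫ ω, ε i ω * ε j ω ∂(ℙ : Measure Ω) = ∫ ω, (ε i * ε j) ω ∂(ℙ : Measure Ω) := rfl
      rw [h2, h, hMean i, hMean j, mul_zero]
  -- mean and covariance of linear combinations
  have mean_sum : ∀ (N : ℕ) (c : ℕ → ℝ),
      (ℙ : Measure Ω)[fun ω => ∑ j ∈ Finset.range N, c j * ε j ω] = 0 := by
    intro N c
    rw [integral_finset_sum _ (fun j _ => (hInt j).const_mul (c j))]
    simp only [integral_const_mul]
    refine Finset.sum_eq_zero fun j _ => ?_
    rw [hMean j, mul_zero]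
  have cov_sum : ∀ (N : ℕ) (c d : ℕ → ℝ),
      covar (fun ω => ∑ j ∈ Finset.range N, c j * ε j ω)
        (fun ω => ∑ j ∈ Finset.range N, d j * ε j ω)
        = ∑ j ∈ Finset.range N, c j * d j := by
    intro N c d
    rw [covar, mean_sum N c, mean_sum N d]
    simp only [sub_zero]
    have hprod : ∀ ω, (∑ j ∈ Finset.range N, c j * ε j ω) * (∑ j ∈ Finset.range N, d j * ε j ω)
        = ∑ i ∈ Finset.range N, ∑ j ∈ Finset.range N, (c i * d j) * (ε i ω * ε j ω) := by
      intro ω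
      rw [Finset.sum_mul_sum]
      exact Finset.sum_congr rfl fun i _ => Finset.sum_congr rfl fun j _ => by ring
    simp_rw [hprod]
    rw [integral_finset_sum _ (fun i _ => integrable_finset_sum _
      (fun j _ => (hIntMul i j).const_mul _))]
    have : ∀ i ∈ Finset.range N,
        ∫ ω, ∑ j ∈ Finset.range N, (c i * d j) * (ε i ω * ε j ω) ∂(ℙ : Measure Ω)
          = ∑ j ∈ Finset.range N, (c i * d j) * (if i = j then 1 else 0) := by
      intro i _
      rw [integral_finset_sum _ (fun j _ => (hIntMul i j).const_mul _)]
      exact Finset.sum_congr rfl fun j _ => by rw [integral_const_mul, hMom i j]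
    rw [Finset.sum_congr rfl this]
    refine Finset.sum_congr rfl fun i hi => ?_
    simp only [mul_ite, mul_one, mul_zero]
    rw [Finset.sum_ite_eq (Finset.range N) i (fun j => c i * d j), if_pos hi]
  -- representation of `SL L t` as a linear combination
  have rep : ∀ (L : ℕ), 0 < L → ∀ t : ℝ, 0 ≤ t → ∀ N : ℕ, ⌊t*(L:ℝ)⌋₊ + 1 + L < N →
      SL L t = fun ω => ∑ j ∈ Finset.range N, msCoef L t j * ε j ω := by
    intro L hL t ht N hN
    have hL0 : (0:ℝ) < L := Nat.cast_pos.mpr hL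
    set n := ⌊t*(L:ℝ)⌋₊ with hn
    have hfl : (n:ℝ) ≤ t*L := Nat.floor_le (mul_nonneg ht hL0.le)
    have hfu : t*L < (n:ℝ) + 1 := Nat.lt_floor_add_one _
    have h1 : (n:ℝ)/L ≤ t := by rw [div_le_iff₀ hL0]; exact hfl
    have h2 : t ≤ ((n:ℝ)+1)/L := by rw [le_div_iff₀ hL0]; exact hfu.le
    funext ω
    rw [hSL L n t h1 h2 ω, hξ, hξ]
    have hsub1 : Finset.Ioc n (n+L) ⊆ Finset.range N := fun j hj =>
      Finset.mem_range.mpr (by have := Finset.mem_Ioc.mp hj; omega)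
    have hsub2 : Finset.Ioc (n+1) (n+1+L) ⊆ Finset.range N := fun j hj =>
      Finset.mem_range.mpr (by have := Finset.mem_Ioc.mp hj; omega)
    have key : ∀ (I : Finset ℕ), I ⊆ Finset.range N → ∀ a : ℝ,
        ∑ j ∈ Finset.range N, (if j ∈ I then a else 0) * ε j ω
          = a * ∑ j ∈ I, ε j ω := by
      intro I hI a
      rw [Finset.mul_sum]
      simp_rw [ite_mul, zero_mul]
      rw [Finset.sum_ite_mem, Finset.inter_eq_right.mpr hI]
    have expand : ∀ j, msCoef L t j * ε j ω
        = ((if j ∈ Finset.Ioc n (n+L) then ((n:ℝ) + 1 - t*L) else 0) * ε j ω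
          + (if j ∈ Finset.Ioc (n+1) (n+1+L) then (t*L - (n:ℝ)) else 0) * ε j ω) / Real.sqrt L := by
      intro j
      rw [msCoef]
      ring
    simp_rw [expand]
    rw [← Finset.sum_div, Finset.sum_add_distrib, key _ hsub1, key _ hsub2]
    have hLne : (L:ℝ) ≠ 0 := hL0.ne'
    have hA : (L:ℝ) * (((n:ℝ)+1)/L - t) = (n:ℝ) + 1 - t*L := by field_simp
    have hB : (L:ℝ) * (t - (n:ℝ)/L) = t*L - (n:ℝ) := by field_simp
    have hcast : ((n+1 : ℕ):ℝ) = (n:ℝ) + 1 := by push_cast; ring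
    rw [show n + 1 + L = (n+1) + L from rfl]
    calc (L:ℝ) * ((((n:ℝ)+1)/L - t) * ((∑ j ∈ Finset.Ioc n (n+L), ε j ω) / Real.sqrt L)
          + (t - (n:ℝ)/L) * ((∑ j ∈ Finset.Ioc (n+1) ((n+1)+L), ε j ω) / Real.sqrt L))
        = ((L:ℝ) * (((n:ℝ)+1)/L - t) * (∑ j ∈ Finset.Ioc n (n+L), ε j ω)
          + (L:ℝ) * (t - (n:ℝ)/L) * (∑ j ∈ Finset.Ioc (n+1) ((n+1)+L), ε j ω)) / Real.sqrt L := by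
          ring
      _ = _ := by rw [hA, hB]
  constructor
  · -- mean zero
    intro L hL t ht
    rw [rep L hL t ht (⌊t*(L:ℝ)⌋₊ + 1 + L + 1) (by omega)]
    exact mean_sum _ _
  · -- covariance limit
    intro t s ht hs
    have hbound : ∀ L : ℕ, 1 ≤ L →
        |covar (SL L t) (SL L (t+s)) - max 0 (1-s)| ≤ 2/(L:ℝ) := by
      intro L hL1
      have hL : 0 < L := hL1
      have hL0 : (0:ℝ) < L := Nat.cast_pos.mpr hL
      set n := ⌊t*(L:ℝ)⌋₊ with hn
      set m := ⌊(t+s)*(L:ℝ)⌋₊ with hm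
      have hnm : n ≤ m := Nat.floor_le_floor
        (mul_le_mul_of_nonneg_right (by linarith) hL0.le)
      set N := m + 1 + L + 1 with hNdef
      rw [rep L hL t ht N (by omega), rep L hL (t+s) (by linarith) N (by omega), cov_sum]
      set α : ℝ := (n:ℝ) + 1 - t*L with hαdef
      set β : ℝ := t*L - (n:ℝ) with hβdef
      set α' : ℝ := (m:ℝ) + 1 - (t+s)*L with hα'def
      set β' : ℝ := (t+s)*L - (m:ℝ) with hβ'def
      have hfl1 : (n:ℝ) ≤ t*L := Nat.floor_le (mul_nonneg ht hL0.le)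
      have hfu1 : t*L < (n:ℝ) + 1 := Nat.lt_floor_add_one _
      have hfl2 : (m:ℝ) ≤ (t+s)*L := Nat.floor_le (mul_nonneg (by linarith) hL0.le)
      have hfu2 : (t+s)*L < (m:ℝ) + 1 := Nat.lt_floor_add_one _
      have hsub1 : Finset.Ioc n (n+L) ⊆ Finset.range N := fun j hj =>
        Finset.mem_range.mpr (by have := Finset.mem_Ioc.mp hj; omega)
      have hsub2 : Finset.Ioc (n+1) (n+1+L) ⊆ Finset.range N := fun j hj =>
        Finset.mem_range.mpr (by have := Finset.mem_Ioc.mp hj; omega)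
      have hsum : ∑ j ∈ Finset.range N, msCoef L t j * msCoef L (t+s) j
          = (((Finset.Ioc n (n+L) ∩ Finset.Ioc m (m+L)).card : ℝ) * (α*α')
            + ((Finset.Ioc n (n+L) ∩ Finset.Ioc (m+1) (m+1+L)).card : ℝ) * (α*β')
            + ((Finset.Ioc (n+1) (n+1+L) ∩ Finset.Ioc m (m+L)).card : ℝ) * (β*α')
            + ((Finset.Ioc (n+1) (n+1+L) ∩ Finset.Ioc (m+1) (m+1+L)).card : ℝ) * (β*β')) / L := by
        have expand : ∀ j, msCoef L t j * msCoef L (t+s) j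
            = ((if j ∈ Finset.Ioc n (n+L) then α else 0) * (if j ∈ Finset.Ioc m (m+L) then α' else 0)
              + (if j ∈ Finset.Ioc n (n+L) then α else 0)
                * (if j ∈ Finset.Ioc (m+1) (m+1+L) then β' else 0)
              + (if j ∈ Finset.Ioc (n+1) (n+1+L) then β else 0)
                * (if j ∈ Finset.Ioc m (m+L) then α' else 0)
              + (if j ∈ Finset.Ioc (n+1) (n+1+L) then β else 0)
                * (if j ∈ Finset.Ioc (m+1) (m+1+L) then β' else 0)) / L := by
          intro j
          rw [msCoef, msCoef, div_mul_div_comm, Real.mul_self_sqrt (Nat.cast_nonneg L)]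
          rw [← hn, ← hm, ← hαdef, ← hβdef, ← hα'def, ← hβ'def]
          ring
        simp_rw [expand]
        rw [← Finset.sum_div]
        congr 1
        rw [Finset.sum_add_distrib, Finset.sum_add_distrib, Finset.sum_add_distrib,
          sum_ite_mul_ite hsub1, sum_ite_mul_ite hsub1,
          sum_ite_mul_ite hsub2, sum_ite_mul_ite hsub2]
      rw [hsum, card_Ioc_inter, card_Ioc_inter, card_Ioc_inter, card_Ioc_inter,
        cast_overlap_card, cast_overlap_card, cast_overlap_card, cast_overlap_card]
      -- pure real estimate from here on
      have key : ∀ a b : ℕ, |((a:ℝ) - b) - ((n:ℝ) - m)| ≤ 1 →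
          |max 0 ((L:ℝ) - |(a:ℝ)-(b:ℝ)|)/L - max 0 (1-s)| ≤ 2/(L:ℝ) := by
        intro a b h1
        have hms : |((m:ℝ) - n) - s*L| ≤ 1 := by
          rw [abs_le]; constructor <;> nlinarith
        have hnmr : |(n:ℝ) - m| = (m:ℝ) - n := by
          rw [abs_of_nonpos (by simp [Nat.cast_le, hnm] : (n:ℝ) - m ≤ 0)]; ring
        have htri : abs (|(a:ℝ)-b| - |(n:ℝ)-m|) ≤ |((a:ℝ)-b) - ((n:ℝ)-m)| :=
          abs_abs_sub_abs_le_abs_sub _ _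
        have habs : abs (|(a:ℝ)-b| - s*L) ≤ 2 := by
          rw [hnmr] at htri
          have htri' : abs (|(a:ℝ)-b| - ((m:ℝ) - n)) ≤ 1 := le_trans htri h1
          rw [abs_le] at htri' hms ⊢
          constructor <;> linarith [htri'.1, htri'.2, hms.1, hms.2]
        have hmaxc : max 0 (1-s) = max 0 ((L:ℝ) - s*L)/L := by
          rw [← max_div_div_right hL0.le, zero_div]
          congr 1
          field_simp
        rw [hmaxc, div_sub_div_same, abs_div, abs_of_pos hL0]
        rw [div_le_div_iff₀ hL0 hL0]
        have h2 := abs_max_sub_max_le_abs ((L:ℝ) - |(a:ℝ)-(b:ℝ)|) ((L:ℝ) - s*L) 0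
        rw [max_comm ((L:ℝ) - |(a:ℝ)-(b:ℝ)|) 0, max_comm ((L:ℝ) - s*L) 0] at h2
        have h3 : |((L:ℝ) - |(a:ℝ)-(b:ℝ)|) - ((L:ℝ) - s*L)| = abs (|(a:ℝ)-b| - s*L) := by
          rw [show ((L:ℝ) - |(a:ℝ)-(b:ℝ)|) - ((L:ℝ) - s*L) = -((|(a:ℝ)-b|) - s*L) by ring,
            abs_neg]
        rw [h3] at h2
        nlinarith [h2, habs]
      have e1 := key n m (by push_cast; rw [abs_le]; constructor <;> linarith)
      have e2 := key n (m+1) (by push_cast; rw [abs_le]; constructor <;> linarith)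
      have e3 := key (n+1) m (by push_cast; rw [abs_le]; constructor <;> linarith)
      have e4 := key (n+1) (m+1) (by push_cast; rw [abs_le]; constructor <;> linarith)
      push_cast at e1 e2 e3 e4 ⊢
      have hα0 : 0 ≤ α := by rw [hαdef]; linarith
      have hβ0 : 0 ≤ β := by rw [hβdef]; linarith
      have hα'0 : 0 ≤ α' := by rw [hα'def]; linarith
      have hβ'0 : 0 ≤ β' := by rw [hβ'def]; linarith
      have hab : α + β = 1 := by rw [hαdef, hβdef]; ring
      have hab' : α' + β' = 1 := by rw [hα'def, hβ'def]; ring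
      have hw1 : (0:ℝ) ≤ α*α' := mul_nonneg hα0 hα'0
      have hw2 : (0:ℝ) ≤ α*β' := mul_nonneg hα0 hβ'0
      have hw3 : (0:ℝ) ≤ β*α' := mul_nonneg hβ0 hα'0
      have hw4 : (0:ℝ) ≤ β*β' := mul_nonneg hβ0 hβ'0
      have hwsum : α*α' + α*β' + β*α' + β*β' = 1 := by
        calc α*α' + α*β' + β*α' + β*β' = (α+β)*(α'+β') := by ring
          _ = 1 := by rw [hab, hab']; ring
      set c := max 0 (1-s) with hc
      set K1 := max 0 ((L:ℝ) - |(n:ℝ) - (m:ℝ)|)/L with hK1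
      set K2 := max 0 ((L:ℝ) - |(n:ℝ) - ((m:ℝ)+1)|)/L with hK2
      set K3 := max 0 ((L:ℝ) - |((n:ℝ)+1) - (m:ℝ)|)/L with hK3
      set K4 := max 0 ((L:ℝ) - |((n:ℝ)+1) - ((m:ℝ)+1)|)/L with hK4
      have hre : (max 0 ((L:ℝ) - |(n:ℝ) - (m:ℝ)|) * (α*α')
            + max 0 ((L:ℝ) - |(n:ℝ) - ((m:ℝ)+1)|) * (α*β')
            + max 0 ((L:ℝ) - |((n:ℝ)+1) - (m:ℝ)|) * (β*α')
            + max 0 ((L:ℝ) - |((n:ℝ)+1) - ((m:ℝ)+1)|) * (β*β')) / (L:ℝ)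
          = K1*(α*α') + K2*(α*β') + K3*(β*α') + K4*(β*β') := by
        rw [hK1, hK2, hK3, hK4]; ring
      rw [hre]
      exact convex_four e1 e2 e3 e4 hw1 hw2 hw3 hw4 hwsum
    -- conclude via squeeze
    have h0 : Tendsto (fun L : ℕ => 2 / (L:ℝ)) atTop (nhds 0) :=
      tendsto_const_div_atTop_nhds_zero_nat 2
    have hlow : Tendsto (fun L : ℕ => max 0 (1-s) - 2/(L:ℝ)) atTop (nhds (max 0 (1-s))) := by
      simpa using tendsto_const_nhds.sub h0
    have hhigh : Tendsto (fun L : ℕ => max 0 (1-s) + 2/(L:ℝ)) atTop (nhds (max 0 (1-s))) := by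
      simpa using tendsto_const_nhds.add h0
    refine tendsto_of_tendsto_of_tendsto_of_le_of_le' hlow hhigh ?_ ?_
    · filter_upwards [eventually_ge_atTop 1] with L hLe
      have := hbound L hLe
      rw [abs_le] at this
      linarith [this.1]
    · filter_upwards [eventually_ge_atTop 1] with L hLe
      have := hbound L hLe
      rw [abs_le] at this
      linarith [this.2]
end

section
/- For all real numbers h and all real z, the Gaussian integral identity ∫_{−∞}^{h} φ(z)[1 − e^{−(h−z)(h−x)}] φ(x) dx = Φ(h)φ(z) − Φ(z)φ(h) holds. -/
open MeasureTheory Real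

/-- The standard normal density. -/
noncomputable def phi (x : ℝ) : ℝ := (Real.sqrt (2 * Real.pi))⁻¹ * Real.exp (-x ^ 2 / 2)

/-- The standard normal cumulative distribution function. -/
noncomputable def Phi (t : ℝ) : ℝ := ∫ x in Set.Iic t, phi x

open Set

/-! Completing the square turns `φ(z) e^{-(h-z)(h-x)} φ(x)` into `φ(h) φ(x + z - h)`, and shifting
the variable turns the integral of the latter over `(-∞, h]` into `φ(h) Φ(z)`. -/

lemma phi_eq_gaussianPDFReal : phi = ProbabilityTheory.gaussianPDFReal 0 1 := by
  ext x
  simp [phi, ProbabilityTheory.gaussianPDFReal]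

lemma integrable_phi : Integrable phi :=
  phi_eq_gaussianPDFReal ▸ ProbabilityTheory.integrable_gaussianPDFReal 0 1

/-- Completing the square: `z²/2 + (h - z)(h - x) + x²/2 = h²/2 + (x + z - h)²/2`. -/
lemma phi_mul_exp_mul_phi (h z x : ℝ) :
    phi z * exp (-(h - z) * (h - x)) * phi x = phi h * phi (x + (z - h)) := by
  have hexp : exp (-z ^ 2 / 2) * exp (-(h - z) * (h - x)) * exp (-x ^ 2 / 2) =
      exp (-h ^ 2 / 2) * exp (-(x + (z - h)) ^ 2 / 2) := by
    simp only [← exp_add]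
    ring_nf
  unfold phi
  linear_combination (sqrt (2 * π))⁻¹ * (sqrt (2 * π))⁻¹ * hexp

lemma setIntegral_Iic_comp_add_right {E : Type*} [NormedAddCommGroup E] [NormedSpace ℝ E]
    (f : ℝ → E) (a c : ℝ) :
    ∫ x in Iic a, f (x + c) = ∫ x in Iic (a + c), f x := by
  have hpre : (· + c) ⁻¹' Iic (a + c) = Iic a := by
    ext x
    simp
  rw [← hpre]
  exact (measurePreserving_add_right volume c).setIntegral_preimage_emb
    (measurableEmbedding_addRight c) f _

/-- For all real `h` and `z`:
`∫_{−∞}^{h} φ(z)[1 − e^{−(h−z)(h−x)}] φ(x) dx = Φ(h)φ(z) − Φ(z)φ(h)`. -/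
theorem integral_transition_kernel_density (h z : ℝ) :
    ∫ x in Set.Iic h, phi z * (1 - Real.exp (-(h - z) * (h - x))) * phi x =
      Phi h * phi z - Phi z * phi h := by
  have hsplit : ∀ x, phi z * (1 - exp (-(h - z) * (h - x))) * phi x =
      phi z * phi x - phi h * phi (x + (z - h)) := fun x => by
    linear_combination -phi_mul_exp_mul_phi h z x
  have hint_left : IntegrableOn (fun x => phi z * phi x) (Iic h) :=
    (integrable_phi.const_mul _).integrableOn
  have hint_right : IntegrableOn (fun x => phi h * phi (x + (z - h))) (Iic h) :=
    ((integrable_phi.comp_add_right _).const_mul _).integrableOn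
  simp_rw [hsplit]
  rw [integral_sub hint_left hint_right, integral_const_mul, integral_const_mul,
    setIntegral_Iic_comp_add_right, add_sub_cancel]
  unfold Phi
  ring
end
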